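/- Let α, β, γ, δ, a, b be real numbers. If Y(a)·Z(π−α)·Y(a)·Z(π−β)·Y(a)·Z(π−γ)·Y(b)·Z(π−δ) equals the 3×3 identity matrix, then (cos γ − cos δ)·sin b = (cos α − cos β)·sin a; if moreover sin b ≠ 0, then sin(α/2)·sin(δ − β/2) = sin(β/2)·sin(γ − α/2). -/

import Mathlib

/-!
Moving the last three factors of the closed-path identity to the right-hand side, the product
`Y(a) Z(π - α) Y(a) Z(π - β) Y(a)` along the three sides of length `a` equals the Euler-angle
product `Z(δ - π) Y(-b) Z(γ - π)`, whose third column starts with `sin b · (cos δ, sin δ)` and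
whose third row with `sin b · (-cos γ, sin γ)`. The `(0,2)` and `(2,0)` entries of the left side
sum to `sin a (cos β - cos α)`, which is the first equation; four of its entries satisfy a
half-angle identity in `α / 2`, `β / 2`, which after dividing by `sin b` is Coolsaet's equality.
-/

open Real

/-- Rotation about the `y`-axis by angle `t`. -/
noncomputable def Yrot (t : ℝ) : Matrix (Fin 3) (Fin 3) ℝ :=
  !![Real.cos t, 0, Real.sin t; 0, 1, 0; -Real.sin t, 0, Real.cos t]

/-- Rotation about the `z`-axis by angle `t`. -/
noncomputable def Zrot (t : ℝ) : Matrix (Fin 3) (Fin 3) ℝ :=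
  !![Real.cos t, -Real.sin t, 0; Real.sin t, Real.cos t, 0; 0, 0, 1]

theorem Yrot_zero : Yrot 0 = 1 := by
  ext i j
  fin_cases i <;> fin_cases j <;> simp [Yrot]

theorem Zrot_zero : Zrot 0 = 1 := by
  ext i j
  fin_cases i <;> fin_cases j <;> simp [Zrot]

theorem Yrot_add (s t : ℝ) : Yrot (s + t) = Yrot s * Yrot t := by
  ext i j
  fin_cases i <;> fin_cases j <;>
    simp [Yrot, Matrix.mul_apply, Fin.sum_univ_three, cos_add, sin_add] <;> ring

theorem Zrot_add (s t : ℝ) : Zrot (s + t) = Zrot s * Zrot t := by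
  ext i j
  fin_cases i <;> fin_cases j <;>
    simp [Zrot, Matrix.mul_apply, Fin.sum_univ_three, cos_add, sin_add] <;> ring

theorem Yrot_inv (t : ℝ) : (Yrot t)⁻¹ = Yrot (-t) :=
  Matrix.inv_eq_left_inv (by rw [← Yrot_add, neg_add_cancel, Yrot_zero])

theorem Zrot_inv (t : ℝ) : (Zrot t)⁻¹ = Zrot (-t) :=
  Matrix.inv_eq_left_inv (by rw [← Zrot_add, neg_add_cancel, Zrot_zero])

section EulerAngles

variable (s t u : ℝ)

theorem Zrot_mul_Yrot_mul_Zrot_apply_zero_two :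
    (Zrot s * Yrot t * Zrot u) 0 2 = cos s * sin t := by
  simp [Yrot, Zrot, Matrix.mul_apply, Fin.sum_univ_three]

theorem Zrot_mul_Yrot_mul_Zrot_apply_one_two :
    (Zrot s * Yrot t * Zrot u) 1 2 = sin s * sin t := by
  simp [Yrot, Zrot, Matrix.mul_apply, Fin.sum_univ_three]

theorem Zrot_mul_Yrot_mul_Zrot_apply_two_zero :
    (Zrot s * Yrot t * Zrot u) 2 0 = -(sin t * cos u) := by
  simp [Yrot, Zrot, Matrix.mul_apply, Fin.sum_univ_three]

theorem Zrot_mul_Yrot_mul_Zrot_apply_two_one :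
    (Zrot s * Yrot t * Zrot u) 2 1 = sin t * sin u := by
  simp [Yrot, Zrot, Matrix.mul_apply, Fin.sum_univ_three]

end EulerAngles

noncomputable def threeEdgeRotation (a α β : ℝ) : Matrix (Fin 3) (Fin 3) ℝ :=
  Yrot a * Zrot (π - α) * Yrot a * Zrot (π - β) * Yrot a

section ThreeEdgeRotation

variable (a α β : ℝ)

theorem threeEdgeRotation_apply_zero_two :
    threeEdgeRotation a α β 0 2 = sin a * (cos a ^ 2 * (1 - cos α * (1 - cos β)) -
      cos a * sin α * sin β + sin a ^ 2 * cos β) := by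
  simp only [threeEdgeRotation, Yrot, Zrot, Matrix.mul_apply, Fin.sum_univ_three, Matrix.of_apply,
    Matrix.cons_val', Matrix.cons_val_zero, Matrix.cons_val_one, Matrix.cons_val_two,
    Matrix.cons_val_fin_one, Matrix.tail_cons, Matrix.vecHead, cos_pi_sub, sin_pi_sub]
  ring

theorem threeEdgeRotation_apply_one_two :
    threeEdgeRotation a α β 1 2 = sin a * (cos a * sin α * (1 - cos β) - cos α * sin β) := by
  simp only [threeEdgeRotation, Yrot, Zrot, Matrix.mul_apply, Fin.sum_univ_three, Matrix.of_apply,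
    Matrix.cons_val', Matrix.cons_val_zero, Matrix.cons_val_one, Matrix.cons_val_two,
    Matrix.cons_val_fin_one, Matrix.tail_cons, Matrix.vecHead, cos_pi_sub, sin_pi_sub]
  ring

theorem threeEdgeRotation_apply_two_zero :
    threeEdgeRotation a α β 2 0 = sin a * (cos a ^ 2 * ((1 - cos α) * cos β - 1) +
      cos a * sin α * sin β - sin a ^ 2 * cos α) := by
  simp only [threeEdgeRotation, Yrot, Zrot, Matrix.mul_apply, Fin.sum_univ_three, Matrix.of_apply,
    Matrix.cons_val', Matrix.cons_val_zero, Matrix.cons_val_one, Matrix.cons_val_two,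
    Matrix.cons_val_fin_one, Matrix.tail_cons, Matrix.vecHead, cos_pi_sub, sin_pi_sub]
  ring

theorem threeEdgeRotation_apply_two_one :
    threeEdgeRotation a α β 2 1 = sin a * (cos a * (1 - cos α) * sin β - sin α * cos β) := by
  simp only [threeEdgeRotation, Yrot, Zrot, Matrix.mul_apply, Fin.sum_univ_three, Matrix.of_apply,
    Matrix.cons_val', Matrix.cons_val_zero, Matrix.cons_val_one, Matrix.cons_val_two,
    Matrix.cons_val_fin_one, Matrix.tail_cons, Matrix.vecHead, cos_pi_sub, sin_pi_sub]
  ring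

theorem threeEdgeRotation_apply_zero_two_add_apply_two_zero :
    threeEdgeRotation a α β 0 2 + threeEdgeRotation a α β 2 0 =
      sin a * (cos β - cos α) := by
  rw [threeEdgeRotation_apply_zero_two, threeEdgeRotation_apply_two_zero]
  linear_combination (sin a * (cos β - cos α)) * sin_sq_add_cos_sq a

theorem sin_half_mul_threeEdgeRotation_eq :
    sin (α / 2) * (threeEdgeRotation a α β 1 2 * cos (β / 2) -
        threeEdgeRotation a α β 0 2 * sin (β / 2)) =
      sin (β / 2) * (threeEdgeRotation a α β 2 1 * cos (α / 2) +
        threeEdgeRotation a α β 2 0 * sin (α / 2)) := by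
  obtain ⟨x, rfl⟩ : ∃ x, α = 2 * x := ⟨α / 2, by ring⟩
  obtain ⟨y, rfl⟩ : ∃ y, β = 2 * y := ⟨β / 2, by ring⟩
  rw [threeEdgeRotation_apply_zero_two, threeEdgeRotation_apply_one_two,
    threeEdgeRotation_apply_two_zero, threeEdgeRotation_apply_two_one,
    mul_div_cancel_left₀ x two_ne_zero, mul_div_cancel_left₀ y two_ne_zero,
    sin_two_mul, sin_two_mul, cos_two_mul_eq_one_sub, cos_two_mul_eq_one_sub]
  linear_combination
    (2 * sin a * sin x * sin y ^ 3 - 2 * sin a * sin x ^ 3 * sin y) * sin_sq_add_cos_sq a +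
    (2 * sin a * sin x * sin y - 4 * sin a * sin x * sin y ^ 3) * sin_sq_add_cos_sq x +
    (-2 * sin a * sin x * sin y + 4 * sin a * sin x ^ 3 * sin y) * sin_sq_add_cos_sq y

end ThreeEdgeRotation

theorem threeEdgeRotation_eq_of_closed_path {α β γ δ a b : ℝ}
    (h : Yrot a * Zrot (π - α) * Yrot a * Zrot (π - β) * Yrot a * Zrot (π - γ) *
      Yrot b * Zrot (π - δ) = 1) :
    threeEdgeRotation a α β = Zrot (-(π - δ)) * Yrot (-b) * Zrot (-(π - γ)) := by
  rw [← Zrot_inv, ← Yrot_inv, ← Zrot_inv, ← Matrix.mul_inv_rev, ← Matrix.mul_inv_rev]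
  exact (Matrix.inv_eq_left_inv (by simpa only [threeEdgeRotation, mul_assoc] using h)).symm

/-- Equalities (14) and (6) in the proof of Lemma 3.12: the closed-path rotation
identity implies `(cos γ - cos δ) sin b = (cos α - cos β) sin a`, and if `sin b ≠ 0`
it implies Coolsaet's equality. -/
theorem stmt_7 (α β γ δ a b : ℝ)
    (h : Yrot a * Zrot (π - α) * Yrot a * Zrot (π - β) * Yrot a * Zrot (π - γ) *
      Yrot b * Zrot (π - δ) = 1) :
    (Real.cos γ - Real.cos δ) * Real.sin b = (Real.cos α - Real.cos β) * Real.sin a ∧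
    (Real.sin b ≠ 0 →
      Real.sin (α / 2) * Real.sin (δ - β / 2) =
        Real.sin (β / 2) * Real.sin (γ - α / 2)) := by
  have hsum := threeEdgeRotation_apply_zero_two_add_apply_two_zero a α β
  have hhalf := sin_half_mul_threeEdgeRotation_eq a α β
  simp only [threeEdgeRotation_eq_of_closed_path h, Zrot_mul_Yrot_mul_Zrot_apply_zero_two,
    Zrot_mul_Yrot_mul_Zrot_apply_one_two, Zrot_mul_Yrot_mul_Zrot_apply_two_zero,
    Zrot_mul_Yrot_mul_Zrot_apply_two_one, cos_neg, sin_neg, cos_pi_sub, sin_pi_sub] at hsum hhalf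
  refine ⟨by linear_combination -hsum, fun hb => mul_left_cancel₀ hb ?_⟩
  rw [sin_sub, sin_sub]
  linear_combination hhalf
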